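/- Let n ∈ (0,3), k > 0, and ε ∈ (0,1). Then there exists a function ψ : [ε, 1/ε] → ℝ that is twice continuously differentiable on [ε, 1/ε], satisfies ψ''(H) + (2/3)·(H² + H^{n−1})^{−1}·ψ(H)^{−1/2} = 0 for ε ≤ H ≤ 1/ε, ψ(ε) = k², ψ'(1/ε) = 0, and moreover satisfies ψ(H) ≥ k² and ψ'(H) ≥ 0 for all H ∈ [ε, 1/ε]. -/

import Mathlib

/-!
Write the problem in integrated form `ψ = T ψ` with
`T ψ (H) = m + ∫_a^H ∫_t^b c(s) ψ(s)^{-1/2} ds dt`, which builds in `ψ(a) = m` and `ψ'(b) = 0`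
(here `m = k²` and `[a, b] = [ε, 1/ε]`). Since `y ↦ y^{-1/2}` is decreasing, `T` is antitone, and
Knaster–Tarski for the monotone map `T ∘ T` gives `u ≤ v` with `T u = v` and `T v = u`.
Homogeneity of `y^{-1/2}` turns `τ v ≤ u` into `√τ (v - m) ≤ u - m`, which improves the ratio `τ`
to `√τ + (1 - √τ) m / B` for a uniform bound `B` of `v`; hence the best ratio is `1` and `u = v` is
a fixed point. A fixed point is `m` plus the double integral of a continuous function, so it is
`C²` on `[a, b]` and solves the boundary-value problem.
-/

open MeasureTheory Set
open scoped ENNReal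

theorem Antitone.exists_le_apply_swap {α : Type*} [CompleteLattice α] {T : α → α}
    (hT : Antitone T) : ∃ u v, u ≤ v ∧ T u = v ∧ T v = u := by
  let S : α →o α := ⟨T ∘ T, hT.comp hT⟩
  have hfix : T (T (OrderHom.lfp S)) = OrderHom.lfp S := S.map_lfp
  refine ⟨OrderHom.lfp S, T (OrderHom.lfp S), S.lfp_le ?_, rfl, hfix⟩
  change T (T (T _)) ≤ T _
  rw [hfix]

theorem le_of_sqrt_mul_sub_le {ι : Type*} {S : Set ι} {u v : ι → ℝ} {m B : ℝ} (hm : 0 < m)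
    (hu : ∀ i ∈ S, m ≤ u i) (hv : ∀ i ∈ S, m ≤ v i ∧ v i ≤ B)
    (hscale : ∀ τ ∈ Ioc (0 : ℝ) 1, (∀ i ∈ S, τ * v i ≤ u i) → ∀ i ∈ S, √τ * (v i - m) ≤ u i - m) :
    ∀ i ∈ S, v i ≤ u i := by
  intro i hi
  have hmB : m ≤ B := (hv i hi).1.trans (hv i hi).2
  have hB : 0 < B := hm.trans_le hmB
  set q := m / B
  have hq0 : 0 < q := by positivity
  have hq1 : q ≤ 1 := div_le_one_of_le₀ hmB hB.le
  have hqv : ∀ j ∈ S, q * v j ≤ m := fun j hj => by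
    rw [div_mul_eq_mul_div, div_le_iff₀ hB]
    exact mul_le_mul_of_nonneg_left (hv j hj).2 hm.le
  set A := {τ ∈ Ioc (0 : ℝ) 1 | ∀ j ∈ S, τ * v j ≤ u j}
  have hqA : q ∈ A := ⟨⟨hq0, hq1⟩, fun j hj => (hqv j hj).trans (hu j hj)⟩
  have hbdd : BddAbove A := ⟨1, fun τ hτ => hτ.1.2⟩
  set τ := sSup A
  -- `A` is closed under suprema since its constraints are `τ ≤ u j / v j`
  have hτA : τ ∈ A := by
    refine ⟨⟨hq0.trans_le (le_csSup hbdd hqA), csSup_le ⟨q, hqA⟩ fun σ hσ => hσ.1.2⟩,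
      fun j hj => ?_⟩
    have hvj : 0 < v j := hm.trans_le (hv j hj).1
    rw [← le_div_iff₀ hvj]
    exact csSup_le ⟨q, hqA⟩ fun σ hσ => (le_div_iff₀ hvj).mpr (hσ.2 j hj)
  set x := √τ
  have hx0 : 0 < x := Real.sqrt_pos.mpr hτA.1.1
  have hx1 : x ≤ 1 := Real.sqrt_le_one.mpr hτA.1.2
  have hxx : x * x = τ := Real.mul_self_sqrt hτA.1.1.le
  -- `u ≥ m + x (v - m) = x v + (1 - x) m ≥ (x + (1 - x) q) v`
  have himp : x + (1 - x) * q ∈ A := by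
    refine ⟨⟨by nlinarith, by nlinarith⟩, fun j hj => ?_⟩
    have := hscale τ hτA.1 hτA.2 j hj
    nlinarith [hqv j hj]
  have hle : x + (1 - x) * q ≤ x * x := hxx ▸ le_csSup hbdd himp
  have hx : x = 1 := by nlinarith
  have := hτA.2 i hi
  rwa [← hxx, hx, one_mul, one_mul] at this

theorem ENNReal.rpow_le_rpow_of_nonpos {x y : ℝ≥0∞} {z : ℝ} (hz : z ≤ 0) (h : x ≤ y) :
    y ^ z ≤ x ^ z := by
  obtain ⟨w, hw, rfl⟩ : ∃ w, 0 ≤ w ∧ z = -w := ⟨-z, by linarith, by ring⟩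
  rw [ENNReal.rpow_neg, ENNReal.rpow_neg]
  exact ENNReal.inv_le_inv.mpr (ENNReal.rpow_le_rpow h hw)

namespace TravelingWave

variable {a b : ℝ}

/-- The solution operator of `-ψ'' = f`, `ψ(a) = 0`, `ψ'(b) = 0` on `[a, b]`. -/
noncomputable def greenIntegral (a b : ℝ) (f : ℝ → ℝ) (H : ℝ) : ℝ := ∫ t in a..H, ∫ s in t..b, f s

section RealGreen

variable {f g : ℝ → ℝ} {H : ℝ}

theorem greenIntegral_congr (h : EqOn f g (Icc a b)) (hH : H ∈ Icc a b) :
    greenIntegral a b f H = greenIntegral a b g H := by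
  refine intervalIntegral.integral_congr fun t ht => intervalIntegral.integral_congr fun s hs => ?_
  rw [uIcc_of_le hH.1] at ht
  rw [uIcc_of_le (ht.2.trans hH.2)] at hs
  exact h ⟨ht.1.trans hs.1, hs.2⟩

theorem continuousOn_greenIntegral (hab : a ≤ b) (hf : IntegrableOn f (Icc a b)) :
    ContinuousOn (greenIntegral a b f) (Icc a b) := by
  have hW : ContinuousOn (fun t => ∫ s in t..b, f s) (Icc a b) := by
    rw [funext fun t => intervalIntegral.integral_symm b t, ← uIcc_of_ge hab]
    rw [← uIcc_of_ge hab] at hf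
    exact (intervalIntegral.continuousOn_primitive_interval hf).neg
  rw [← uIcc_of_le hab] at hW ⊢
  exact intervalIntegral.continuousOn_primitive_interval (hW.integrableOn_compact isCompact_uIcc)

theorem hasDerivAt_integral_left (hf : Continuous f) (t : ℝ) :
    HasDerivAt (fun t => ∫ s in t..b, f s) (-f t) t :=
  intervalIntegral.integral_hasDerivAt_left (hf.intervalIntegrable _ _)
    (hf.stronglyMeasurableAtFilter _ _) hf.continuousAt

theorem hasDerivAt_greenIntegral (hf : Continuous f) (H : ℝ) :
    HasDerivAt (greenIntegral a b f) (∫ s in H..b, f s) H := by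
  have hW : Continuous fun t => ∫ s in t..b, f s :=
    continuous_iff_continuousAt.mpr fun t => (hasDerivAt_integral_left hf t).continuousAt
  exact intervalIntegral.integral_hasDerivAt_right (hW.intervalIntegrable _ _)
    (hW.stronglyMeasurableAtFilter _ _) hW.continuousAt

theorem contDiff_greenIntegral (hf : Continuous f) : ContDiff ℝ 2 (greenIntegral a b f) := by
  have hderiv : deriv (greenIntegral a b f) = fun t => ∫ s in t..b, f s :=
    funext fun H => (hasDerivAt_greenIntegral hf H).deriv
  rw [show (2 : WithTop ℕ∞) = 1 + 1 from rfl, contDiff_succ_iff_deriv, hderiv,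
    contDiff_one_iff_deriv]
  refine ⟨fun H => (hasDerivAt_greenIntegral hf H).differentiableAt, by simp,
    fun t => (hasDerivAt_integral_left hf t).differentiableAt, ?_⟩
  rw [show deriv (fun t => ∫ s in t..b, f s) = fun t => -f t from
    funext fun t => (hasDerivAt_integral_left hf t).deriv]
  exact hf.neg

theorem exists_continuous_eqOn_Icc (hab : a ≤ b) (hf : ContinuousOn f (Icc a b)) :
    ∃ g, Continuous g ∧ EqOn f g (Icc a b) :=
  ⟨fun s => f (projIcc a b hab s),
    hf.comp_continuous (continuous_subtype_val.comp continuous_projIcc) fun s =>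
      (projIcc a b hab s).2,
    fun s hs => by simp [projIcc_of_mem hab hs]⟩

theorem integral_left_congr (h : EqOn f g (Icc a b)) (hH : H ∈ Icc a b) :
    ∫ s in H..b, f s = ∫ s in H..b, g s :=
  intervalIntegral.integral_congr fun _ hs => h (Icc_subset_Icc_left hH.1 (uIcc_of_le hH.2 ▸ hs))

theorem hasDerivWithinAt_integral_left (hab : a ≤ b) (hf : ContinuousOn f (Icc a b))
    (hH : H ∈ Icc a b) :
    HasDerivWithinAt (fun t => ∫ s in t..b, f s) (-f H) (Icc a b) H := by
  obtain ⟨g, hg, hfg⟩ := exists_continuous_eqOn_Icc hab hf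
  rw [hfg hH]
  exact (hasDerivAt_integral_left hg H).hasDerivWithinAt.congr
    (fun t ht => integral_left_congr hfg ht) (integral_left_congr hfg hH)

theorem hasDerivWithinAt_greenIntegral (hab : a ≤ b) (hf : ContinuousOn f (Icc a b))
    (hH : H ∈ Icc a b) :
    HasDerivWithinAt (greenIntegral a b f) (∫ s in H..b, f s) (Icc a b) H := by
  obtain ⟨g, hg, hfg⟩ := exists_continuous_eqOn_Icc hab hf
  rw [integral_left_congr hfg hH]
  exact (hasDerivAt_greenIntegral hg H).hasDerivWithinAt.congr
    (fun t ht => greenIntegral_congr hfg ht) (greenIntegral_congr hfg hH)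

theorem contDiffOn_greenIntegral (hab : a ≤ b) (hf : ContinuousOn f (Icc a b)) :
    ContDiffOn ℝ 2 (greenIntegral a b f) (Icc a b) := by
  obtain ⟨g, hg, hfg⟩ := exists_continuous_eqOn_Icc hab hf
  exact (contDiff_greenIntegral hg).contDiffOn.congr fun t ht => greenIntegral_congr hfg ht

end RealGreen

def IsBVPSolution (a b m : ℝ) (c ψ : ℝ → ℝ) : Prop :=
  ContDiffOn ℝ 2 ψ (Icc a b) ∧
    (∀ H ∈ Icc a b,
      derivWithin (derivWithin ψ (Icc a b)) (Icc a b) H + c H * ψ H ^ (-(1 / 2) : ℝ) = 0) ∧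
    ψ a = m ∧ derivWithin ψ (Icc a b) b = 0 ∧ (∀ H ∈ Icc a b, m ≤ ψ H) ∧
    ∀ H ∈ Icc a b, 0 ≤ derivWithin ψ (Icc a b) H

theorem isBVPSolution_of_eqOn_greenIntegral {m : ℝ} {c ψ : ℝ → ℝ} (hab : a < b) (hm : 0 < m)
    (hc : ContinuousOn c (Icc a b)) (hc0 : ∀ s ∈ Icc a b, 0 ≤ c s)
    (hψ : ContinuousOn ψ (Icc a b)) (hψm : ∀ H ∈ Icc a b, m ≤ ψ H)
    (heq : EqOn ψ (fun H => m + greenIntegral a b (fun s => c s * ψ s ^ (-(1 / 2) : ℝ)) H)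
      (Icc a b)) :
    IsBVPSolution a b m c ψ := by
  set f := fun s => c s * ψ s ^ (-(1 / 2) : ℝ)
  have hf : ContinuousOn f (Icc a b) :=
    hc.mul (hψ.rpow_const fun H hH => Or.inl (hm.trans_le (hψm H hH)).ne')
  have hud := uniqueDiffOn_Icc hab
  have hd1 : ∀ H ∈ Icc a b, derivWithin ψ (Icc a b) H = ∫ s in H..b, f s := fun H hH =>
    (((hasDerivWithinAt_greenIntegral hab.le hf hH).const_add m).congr heq
      (heq hH)).derivWithin (hud H hH)
  have hd2 : ∀ H ∈ Icc a b, derivWithin (derivWithin ψ (Icc a b)) (Icc a b) H = -f H :=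
    fun H hH => ((hasDerivWithinAt_integral_left hab.le hf hH).congr hd1
      (hd1 H hH)).derivWithin (hud H hH)
  refine ⟨(contDiffOn_const.add (contDiffOn_greenIntegral hab.le hf)).congr heq,
    fun H hH => ?_, ?_, ?_, hψm, fun H hH => ?_⟩
  · rw [hd2 H hH, neg_add_cancel]
  · rw [heq (left_mem_Icc.mpr hab.le)]
    simp [greenIntegral]
  · rw [hd1 b (right_mem_Icc.mpr hab.le), intervalIntegral.integral_same]
  · rw [hd1 H hH]
    refine intervalIntegral.integral_nonneg hH.2 fun s hs => ?_
    have hs' : s ∈ Icc a b := ⟨hH.1.trans hs.1, hs.2⟩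
    exact mul_nonneg (hc0 s hs') (Real.rpow_nonneg (hm.le.trans (hψm s hs')) _)

noncomputable def greenLIntegral (a b : ℝ) (f : ℝ → ℝ≥0∞) (H : ℝ) : ℝ≥0∞ :=
  ∫⁻ t in Ioc a H, ∫⁻ s in Ioc t b, f s

section LowerGreen

variable {f g : ℝ → ℝ≥0∞} {r : ℝ≥0∞} {H : ℝ}

theorem setLIntegral_Ioc_le {x y : ℝ} (h : ∀ s ∈ Ioc x y, f s ≤ r) :
    ∫⁻ s in Ioc x y, f s ≤ r * ENNReal.ofReal (y - x) := by
  calc ∫⁻ s in Ioc x y, f s ≤ ∫⁻ _ in Ioc x y, r := setLIntegral_mono' measurableSet_Ioc h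
    _ = r * ENNReal.ofReal (y - x) := by rw [setLIntegral_const, Real.volume_Ioc]

theorem greenLIntegral_le_greenLIntegral (h : ∀ s ∈ Ioc a b, f s ≤ g s) (H : ℝ) :
    greenLIntegral a b f H ≤ greenLIntegral a b g H :=
  setLIntegral_mono' measurableSet_Ioc fun _ ht =>
    setLIntegral_mono' measurableSet_Ioc fun s hs => h s (Ioc_subset_Ioc_left ht.1.le hs)

theorem greenLIntegral_congr (h : EqOn f g (Ioc a b)) :
    greenLIntegral a b f = greenLIntegral a b g :=
  funext fun H => le_antisymm (greenLIntegral_le_greenLIntegral (fun _ hs => (h hs).le) H)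
    (greenLIntegral_le_greenLIntegral (fun _ hs => (h hs).ge) H)

theorem monotone_greenLIntegral : Monotone (greenLIntegral a b f) := fun _ _ h =>
  lintegral_mono_set (Ioc_subset_Ioc_right h)

theorem greenLIntegral_const_mul (hr : r ≠ ⊤) :
    greenLIntegral a b (fun s => r * f s) H = r * greenLIntegral a b f H := by
  simp only [greenLIntegral, lintegral_const_mul' _ _ hr]

theorem greenLIntegral_le (h : ∀ s ∈ Ioc a b, f s ≤ r) (hH : H ≤ b) :
    greenLIntegral a b f H ≤ r * ENNReal.ofReal (b - a) * ENNReal.ofReal (b - a) := by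
  have hinner : ∀ t ∈ Ioc a H, ∫⁻ s in Ioc t b, f s ≤ r * ENNReal.ofReal (b - a) := fun t ht =>
    (setLIntegral_Ioc_le fun s hs => h s (Ioc_subset_Ioc_left ht.1.le hs)).trans
      (by gcongr; linarith [ht.1])
  exact (setLIntegral_Ioc_le hinner).trans (by gcongr)

theorem toReal_greenLIntegral (hf : AEMeasurable f (volume.restrict (Ioc a b)))
    (h : ∀ s ∈ Ioc a b, f s ≤ r) (hr : r ≠ ⊤) (hH : H ∈ Icc a b) :
    (greenLIntegral a b f H).toReal = greenIntegral a b (fun s => (f s).toReal) H := by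
  have hinner : ∀ t ∈ Icc a b, (∫⁻ s in Ioc t b, f s).toReal = ∫ s in t..b, (f s).toReal := by
    intro t ht
    rw [intervalIntegral.integral_of_le ht.2, integral_toReal
      (hf.mono_set (Ioc_subset_Ioc_left ht.1)) (ae_restrict_of_forall_mem measurableSet_Ioc
        fun s hs => (h s (Ioc_subset_Ioc_left ht.1 hs)).trans_lt hr.lt_top)]
  have hanti : Antitone fun t => ∫⁻ s in Ioc t b, f s := fun _ _ ht =>
    lintegral_mono_set (Ioc_subset_Ioc_left ht)
  have hfin : ∀ t ∈ Ioc a H, ∫⁻ s in Ioc t b, f s < ⊤ := fun t ht =>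
    (setLIntegral_Ioc_le fun s hs => h s (Ioc_subset_Ioc_left ht.1.le hs)).trans_lt
      (ENNReal.mul_lt_top hr.lt_top ENNReal.ofReal_lt_top)
  rw [greenLIntegral, greenIntegral, intervalIntegral.integral_of_le hH.1, ← integral_toReal
    hanti.measurable.aemeasurable (ae_restrict_of_forall_mem measurableSet_Ioc hfin)]
  exact setIntegral_congr_fun measurableSet_Ioc fun t ht => hinner t ⟨ht.1.le, ht.2.trans hH.2⟩

end LowerGreen

variable {m C : ℝ} {c : ℝ → ℝ} {φ ψ : ℝ → ℝ≥0∞} {H : ℝ}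

noncomputable def sourceTerm (c : ℝ → ℝ) (φ : ℝ → ℝ≥0∞) (s : ℝ) : ℝ≥0∞ :=
  ENNReal.ofReal (c s) * φ s ^ (-(1 / 2) : ℝ)

/-- Lower integrals make `integralOp` antitone on the whole complete lattice `ℝ → ℝ≥0∞`, free of
measurability and integrability side conditions, as Knaster–Tarski requires. -/
noncomputable def integralOp (a b m : ℝ) (c : ℝ → ℝ) (φ : ℝ → ℝ≥0∞) (H : ℝ) : ℝ≥0∞ :=
  ENNReal.ofReal m + greenLIntegral a b (sourceTerm c φ) H

theorem sourceTerm_le_sourceTerm {s : ℝ} (h : φ s ≤ ψ s) : sourceTerm c ψ s ≤ sourceTerm c φ s :=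
  mul_le_mul' le_rfl (ENNReal.rpow_le_rpow_of_nonpos (by norm_num) h)

theorem antitone_integralOp : Antitone (integralOp a b m c) := fun _ _ h H =>
  add_le_add_right
    (greenLIntegral_le_greenLIntegral (fun s _ => sourceTerm_le_sourceTerm (h s)) H) _

theorem monotone_integralOp : Monotone (integralOp a b m c φ) := fun _ _ h =>
  add_le_add_right (monotone_greenLIntegral h) _

theorem ofReal_le_integralOp : ENNReal.ofReal m ≤ integralOp a b m c φ H := le_self_add

theorem sourceTerm_le (hm : 0 < m) (hC : ∀ s ∈ Icc a b, c s ≤ C)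
    (hφ : ∀ s, ENNReal.ofReal m ≤ φ s) :
    ∀ s ∈ Icc a b, sourceTerm c φ s ≤ ENNReal.ofReal (C * m ^ (-(1 / 2) : ℝ)) := fun s hs => by
  rw [ENNReal.ofReal_mul' (Real.rpow_nonneg hm.le _), ← ENNReal.ofReal_rpow_of_pos hm]
  exact mul_le_mul' (ENNReal.ofReal_le_ofReal (hC s hs))
    (ENNReal.rpow_le_rpow_of_nonpos (by norm_num : (-(1 / 2) : ℝ) ≤ 0) (hφ s))

theorem exists_integralOp_le (hm : 0 < m) (hC : ∀ s ∈ Icc a b, c s ≤ C) :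
    ∃ M ≠ ⊤, ∀ φ, (∀ s, ENNReal.ofReal m ≤ φ s) → ∀ H ≤ b, integralOp a b m c φ H ≤ M :=
  ⟨_, by finiteness, fun _ hφ _ hH => add_le_add_right (greenLIntegral_le
    (fun s hs => sourceTerm_le hm hC hφ s (Ioc_subset_Icc_self hs)) hH) _⟩

theorem toReal_integralOp_sub (hm : 0 ≤ m) (h : integralOp a b m c φ H ≠ ⊤) :
    (integralOp a b m c φ H).toReal - m = (greenLIntegral a b (sourceTerm c φ) H).toReal := by
  rw [integralOp, ENNReal.toReal_add ENNReal.ofReal_ne_top (ne_top_of_le_ne_top h le_add_self),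
    ENNReal.toReal_ofReal hm, add_sub_cancel_left]

theorem sqrt_mul_greenLIntegral_le {τ : ℝ} (hτ : 0 < τ) (hψ : ∀ s ∈ Ioc a b, ψ s ≠ 0)
    (h : ∀ s ∈ Ioc a b, ENNReal.ofReal τ * ψ s ≤ φ s) (H : ℝ) :
    ENNReal.ofReal √τ * greenLIntegral a b (sourceTerm c φ) H ≤
      greenLIntegral a b (sourceTerm c ψ) H := by
  have hτ' : √τ * τ ^ (-(1 / 2) : ℝ) = 1 := by
    rw [Real.rpow_neg hτ.le, ← Real.sqrt_eq_rpow, mul_inv_cancel₀ (Real.sqrt_pos.mpr hτ).ne']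
  rw [← greenLIntegral_const_mul ENNReal.ofReal_ne_top]
  refine greenLIntegral_le_greenLIntegral (fun s hs => ?_) H
  calc ENNReal.ofReal √τ * sourceTerm c φ s
      ≤ ENNReal.ofReal (c s) * (ENNReal.ofReal √τ * (ENNReal.ofReal τ * ψ s) ^ (-(1 / 2) : ℝ)) := by
        rw [sourceTerm, mul_left_comm]
        refine mul_le_mul' le_rfl (mul_le_mul' le_rfl ?_)
        exact ENNReal.rpow_le_rpow_of_nonpos (by norm_num : (-(1 / 2) : ℝ) ≤ 0) (h s hs)
    _ = sourceTerm c ψ s := by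
        rw [ENNReal.mul_rpow_of_ne_zero (by positivity) (hψ s hs), ← mul_assoc (ENNReal.ofReal √τ),
          ENNReal.ofReal_rpow_of_pos hτ, ← ENNReal.ofReal_mul (Real.sqrt_nonneg τ), hτ',
          ENNReal.ofReal_one, one_mul, sourceTerm]

theorem sqrt_mul_toReal_sub_le {u v : ℝ → ℝ≥0∞} (hm : 0 < m) {τ : ℝ} (hτ : 0 < τ)
    (hTu : integralOp a b m c u = v) (hTv : integralOp a b m c v = u)
    (hu : ∀ H ≤ b, u H ≠ ⊤) (hv : ∀ H ≤ b, v H ≠ ⊤)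
    (h : ∀ s ∈ Icc a b, τ * (v s).toReal ≤ (u s).toReal) (hH : H ≤ b) :
    √τ * ((v H).toReal - m) ≤ (u H).toReal - m := by
  have h' : ∀ s ∈ Ioc a b, ENNReal.ofReal τ * v s ≤ u s := fun s hs => by
    rw [← ENNReal.ofReal_toReal (hv s hs.2), ← ENNReal.ofReal_toReal (hu s hs.2),
      ← ENNReal.ofReal_mul hτ.le]
    exact ENNReal.ofReal_le_ofReal (h s (Ioc_subset_Icc_self hs))
  have hv0 : ∀ s ∈ Ioc a b, v s ≠ 0 := fun s _ =>
    ((ENNReal.ofReal_pos.mpr hm).trans_le (hTu ▸ ofReal_le_integralOp)).ne'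
  have hfin : greenLIntegral a b (sourceTerm c v) H ≠ ⊤ :=
    ne_top_of_le_ne_top (hu H hH) (hTv ▸ le_add_self)
  have hv_sub := toReal_integralOp_sub (c := c) hm.le (hTu ▸ hv H hH)
  have hu_sub := toReal_integralOp_sub (c := c) hm.le (hTv ▸ hu H hH)
  rw [hTu] at hv_sub
  rw [hTv] at hu_sub
  rw [hv_sub, hu_sub, ← ENNReal.toReal_ofReal (Real.sqrt_nonneg τ), ← ENNReal.toReal_mul]
  exact ENNReal.toReal_mono hfin (sqrt_mul_greenLIntegral_le hτ hv0 h' H)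

theorem eqOn_of_integralOp_swap (hm : 0 < m) (hC : ∀ s ∈ Icc a b, c s ≤ C) {u v : ℝ → ℝ≥0∞}
    (huv : u ≤ v) (hTu : integralOp a b m c u = v) (hTv : integralOp a b m c v = u) :
    EqOn u v (Icc a b) := by
  obtain ⟨M, hM, hle⟩ := exists_integralOp_le hm hC
  have hu_lb : ∀ s, ENNReal.ofReal m ≤ u s := fun s => hTv ▸ ofReal_le_integralOp
  have hv_lb : ∀ s, ENNReal.ofReal m ≤ v s := fun s => hTu ▸ ofReal_le_integralOp
  have hv_le : ∀ H ≤ b, v H ≤ M := fun H hH => hTu ▸ hle u hu_lb H hH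
  have hu_ne : ∀ H ≤ b, u H ≠ ⊤ := fun H hH => ne_top_of_le_ne_top hM (hTv ▸ hle v hv_lb H hH)
  have hv_ne : ∀ H ≤ b, v H ≠ ⊤ := fun H hH => ne_top_of_le_ne_top hM (hv_le H hH)
  have hvu := le_of_sqrt_mul_sub_le (S := Icc a b) (u := fun H => (u H).toReal)
    (v := fun H => (v H).toReal) (B := M.toReal) hm
    (fun H hH => (ENNReal.ofReal_le_iff_le_toReal (hu_ne H hH.2)).mp (hu_lb H))
    (fun H hH => ⟨(ENNReal.ofReal_le_iff_le_toReal (hv_ne H hH.2)).mp (hv_lb H),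
      ENNReal.toReal_mono hM (hv_le H hH.2)⟩)
    (fun τ hτ h H hH => sqrt_mul_toReal_sub_le hm hτ.1 hTu hTv hu_ne hv_ne h hH.2)
  exact fun H hH => le_antisymm (huv H)
    ((ENNReal.toReal_le_toReal (hv_ne H hH.2) (hu_ne H hH.2)).mp (hvu H hH))

theorem exists_fixedPoint_integralOp (hm : 0 < m) (hC : ∀ s ∈ Icc a b, c s ≤ C) :
    ∃ φ, integralOp a b m c φ = φ := by
  obtain ⟨u, v, huv, hTu, hTv⟩ :=
    (antitone_integralOp (a := a) (b := b) (m := m) (c := c)).exists_le_apply_swap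
  have heq := eqOn_of_integralOp_swap hm hC huv hTu hTv
  have hsource : EqOn (sourceTerm c u) (sourceTerm c v) (Ioc a b) := fun s hs => by
    simp only [sourceTerm, heq (Ioc_subset_Icc_self hs)]
  refine ⟨u, ?_⟩
  calc integralOp a b m c u = integralOp a b m c v := by
        unfold integralOp
        rw [greenLIntegral_congr hsource]
    _ = u := hTv

theorem exists_eqOn_greenIntegral (hm : 0 < m) (hc : ContinuousOn c (Icc a b))
    (hc0 : ∀ s ∈ Icc a b, 0 ≤ c s) :
    ∃ u : ℝ → ℝ, Measurable u ∧ (∀ H ∈ Icc a b, m ≤ u H) ∧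
      EqOn u (fun H => m + greenIntegral a b (fun s => c s * u s ^ (-(1 / 2) : ℝ)) H)
        (Icc a b) := by
  obtain ⟨C, hCub⟩ := isCompact_Icc.bddAbove_image hc
  have hC : ∀ s ∈ Icc a b, c s ≤ C := fun s hs => hCub (mem_image_of_mem c hs)
  obtain ⟨φ, hφ⟩ := exists_fixedPoint_integralOp hm hC
  obtain ⟨M, hM, hle⟩ := exists_integralOp_le hm hC
  have hφm : ∀ s, ENNReal.ofReal m ≤ φ s := fun s => hφ ▸ ofReal_le_integralOp
  have hφ_ne : ∀ H ≤ b, φ H ≠ ⊤ := fun H hH => ne_top_of_le_ne_top hM (hφ ▸ hle φ hφm H hH)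
  have hφ_meas : Measurable φ := hφ ▸ monotone_integralOp.measurable
  have hsource_meas : AEMeasurable (sourceTerm c φ) (volume.restrict (Ioc a b)) :=
    (ENNReal.measurable_ofReal.comp_aemeasurable
      ((hc.mono Ioc_subset_Icc_self).aemeasurable measurableSet_Ioc)).mul
      (hφ_meas.pow_const _).aemeasurable
  refine ⟨fun H => (φ H).toReal, hφ_meas.ennreal_toReal,
    fun H hH => (ENNReal.ofReal_le_iff_le_toReal (hφ_ne H hH.2)).mp (hφm H), fun H hH => ?_⟩
  have hφH := toReal_integralOp_sub (c := c) hm.le (hφ ▸ hφ_ne H hH.2)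
  rw [hφ, sub_eq_iff_eq_add'] at hφH
  dsimp only
  rw [hφH, toReal_greenLIntegral hsource_meas
    (fun s hs => sourceTerm_le hm hC hφm s (Ioc_subset_Icc_self hs)) ENNReal.ofReal_ne_top hH]
  congr 1
  refine greenIntegral_congr (fun s hs => ?_) hH
  simp only [sourceTerm, ENNReal.toReal_mul, ENNReal.toReal_ofReal (hc0 s hs), ENNReal.toReal_rpow]

theorem exists_isBVPSolution (hab : a < b) (hm : 0 < m) (hc : ContinuousOn c (Icc a b))
    (hc0 : ∀ s ∈ Icc a b, 0 ≤ c s) : ∃ ψ, IsBVPSolution a b m c ψ := by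
  obtain ⟨u, hu_meas, hum, heq⟩ := exists_eqOn_greenIntegral hm hc hc0
  have hint : IntegrableOn (fun s => c s * u s ^ (-(1 / 2) : ℝ)) (Icc a b) := by
    refine IntegrableOn.continuousOn_mul hc
      (Measure.integrableOn_of_bounded (M := m ^ (-(1 / 2) : ℝ)) (by simp)
        (hu_meas.pow_const _).aestronglyMeasurable
        (ae_restrict_of_forall_mem measurableSet_Icc fun s hs => ?_)) isCompact_Icc
    have hus : 0 < u s := hm.trans_le (hum s hs)
    rw [Real.norm_of_nonneg (Real.rpow_nonneg hus.le _)]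
    exact Real.rpow_le_rpow_of_nonpos hm (hum s hs) (by norm_num)
  have hcont : ContinuousOn u (Icc a b) :=
    (continuousOn_const.add (continuousOn_greenIntegral hab.le hint)).congr heq
  exact ⟨u, isBVPSolution_of_eqOn_greenIntegral hab hm hc hc0 hcont hum heq⟩

end TravelingWave

open TravelingWave in
theorem approximating_problem_existence_general (n k ε : ℝ)
    (hk : 0 < k) (hε : ε ∈ Set.Ioo (0 : ℝ) 1) :
    ∃ ψ : ℝ → ℝ,
      ContDiffOn ℝ 2 ψ (Set.Icc ε (1 / ε)) ∧
      (∀ H ∈ Set.Icc ε (1 / ε),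
        derivWithin (derivWithin ψ (Set.Icc ε (1 / ε))) (Set.Icc ε (1 / ε)) H
          + 2 / 3 * (H ^ 2 + H ^ (n - 1))⁻¹ * ψ H ^ (-(1 / 2) : ℝ) = 0) ∧
      ψ ε = k ^ 2 ∧
      derivWithin ψ (Set.Icc ε (1 / ε)) (1 / ε) = 0 ∧
      (∀ H ∈ Set.Icc ε (1 / ε), k ^ 2 ≤ ψ H) ∧
      (∀ H ∈ Set.Icc ε (1 / ε), 0 ≤ derivWithin ψ (Set.Icc ε (1 / ε)) H) := by
  obtain ⟨hε0, hε1⟩ := hε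
  have hlt : ε < 1 / ε := by rw [lt_div_iff₀ hε0]; nlinarith
  have hc : ContinuousOn (fun H : ℝ => 2 / 3 * (H ^ 2 + H ^ (n - 1))⁻¹) (Icc ε (1 / ε)) := by
    refine continuousOn_const.mul (ContinuousOn.inv₀ ?_ fun H hH => ?_)
    · exact (continuousOn_pow 2).add
        (continuousOn_id.rpow_const fun H hH => Or.inl (hε0.trans_le hH.1).ne')
    · have := hε0.trans_le hH.1
      positivity
  exact exists_isBVPSolution hlt (by positivity) hc fun H hH => by
    have := hε0.trans_le hH.1
    positivity

/-- Existence for the approximating two-point boundary-value problem on the truncated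
interval `[ε, 1/ε]`: there is a twice continuously differentiable `ψ` on `[ε, 1/ε]`
satisfying the traveling-wave ODE `ψ'' + (2/3)(H² + H^{n−1})⁻¹ψ^{−1/2} = 0` there,
with `ψ(ε) = k²`, `ψ'(1/ε) = 0`, and moreover `ψ ≥ k²` and `ψ' ≥ 0` on `[ε, 1/ε]`. -/
theorem approximating_problem_existence (n k ε : ℝ) (hn : n ∈ Set.Ioo (0 : ℝ) 3)
    (hk : 0 < k) (hε : ε ∈ Set.Ioo (0 : ℝ) 1) :
    ∃ ψ : ℝ → ℝ,
      ContDiffOn ℝ 2 ψ (Set.Icc ε (1 / ε)) ∧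
      (∀ H ∈ Set.Icc ε (1 / ε),
        derivWithin (derivWithin ψ (Set.Icc ε (1 / ε))) (Set.Icc ε (1 / ε)) H
          + 2 / 3 * (H ^ 2 + H ^ (n - 1))⁻¹ * ψ H ^ (-(1 / 2) : ℝ) = 0) ∧
      ψ ε = k ^ 2 ∧
      derivWithin ψ (Set.Icc ε (1 / ε)) (1 / ε) = 0 ∧
      (∀ H ∈ Set.Icc ε (1 / ε), k ^ 2 ≤ ψ H) ∧
      (∀ H ∈ Set.Icc ε (1 / ε), 0 ≤ derivWithin ψ (Set.Icc ε (1 / ε)) H) :=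
  approximating_problem_existence_general n k ε hk hε
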